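/- arXiv:2402.15821 — 6 statements merged into one kernel-verified Lean document; each statement's English description precedes it below -/
import Mathlib

section
/- For every x > 0, there exists a two-player, two-action delegation game in which each agent's utility function equals its principal's, the agent game has a unique Nash equilibrium σ, and the principals' normalised welfare regret satisfies (ŵ⋆ - ŵ(σ))/(ŵ₊ - ŵ₋) = 1 - x, where ŵ₊ = (1/n)Σᵢ max_s ûⁱ(s) and ŵ₋ = (1/n)Σᵢ min_s ûⁱ(s). (A Prisoner's Dilemma with payoffs (1-x/2,1-x/2), (0,1), (1,0), (x/2,x/2) witnesses this.) -/
open Finset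

def IsDist {d : ℕ} (σ : Fin d → ℝ) : Prop := (∀ s, 0 ≤ σ s) ∧ ∑ s, σ s = 1

/-- Expected utility in a two-player game under independent mixed strategies. -/
def E2 {d : ℕ} (σ1 σ2 : Fin d → ℝ) (u : Fin d → Fin d → ℝ) : ℝ :=
  ∑ s1, ∑ s2, σ1 s1 * σ2 s2 * u s1 s2

/-- Nash equilibrium of a two-player game. -/
def IsNE {d : ℕ} (u1 u2 : Fin d → Fin d → ℝ) (σ1 σ2 : Fin d → ℝ) : Prop :=
  IsDist σ1 ∧ IsDist σ2 ∧
  (∀ τ : Fin d → ℝ, IsDist τ → E2 τ σ2 u1 ≤ E2 σ1 σ2 u1) ∧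
  (∀ τ : Fin d → ℝ, IsDist τ → E2 σ1 τ u2 ≤ E2 σ1 σ2 u2)

theorem stmt8 (x : ℝ) (hx : 0 < x) (hx1 : x ≤ 1) :
    ∃ (uhat1 uhat2 u1 u2 : Fin 2 → Fin 2 → ℝ) (σ1 σ2 : Fin 2 → ℝ) (wstar : ℝ),
      -- each agent's utility function equals its principal's
      u1 = uhat1 ∧ u2 = uhat2 ∧
      -- σ is the unique Nash equilibrium of the agent game
      IsNE u1 u2 σ1 σ2 ∧
      (∀ τ1 τ2 : Fin 2 → ℝ, IsNE u1 u2 τ1 τ2 → τ1 = σ1 ∧ τ2 = σ2) ∧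
      -- wstar is the maximal principal welfare over mixed profiles
      IsGreatest {w : ℝ | ∃ τ1 τ2 : Fin 2 → ℝ, IsDist τ1 ∧ IsDist τ2 ∧
        w = (E2 τ1 τ2 uhat1 + E2 τ1 τ2 uhat2) / 2} wstar ∧
      -- the normalised welfare regret equals 1 - x
      (wstar - (E2 σ1 σ2 uhat1 + E2 σ1 σ2 uhat2) / 2) /
        ((Finset.univ.sup' ⟨((0 : Fin 2), (0 : Fin 2)), Finset.mem_univ _⟩
            (fun p : Fin 2 × Fin 2 => uhat1 p.1 p.2) +
          Finset.univ.sup' ⟨((0 : Fin 2), (0 : Fin 2)), Finset.mem_univ _⟩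
            (fun p : Fin 2 × Fin 2 => uhat2 p.1 p.2)) / 2 -
         (Finset.univ.inf' ⟨((0 : Fin 2), (0 : Fin 2)), Finset.mem_univ _⟩
            (fun p : Fin 2 × Fin 2 => uhat1 p.1 p.2) +
          Finset.univ.inf' ⟨((0 : Fin 2), (0 : Fin 2)), Finset.mem_univ _⟩
            (fun p : Fin 2 × Fin 2 => uhat2 p.1 p.2)) / 2) = 1 - x := by
  classical
  set U1 : Fin 2 → Fin 2 → ℝ := ![![1 - x/2, 0], ![1, x/2]] with hU1
  set U2 : Fin 2 → Fin 2 → ℝ := ![![1 - x/2, 1], ![0, x/2]] with hU2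
  have hv1 : ∀ i j : Fin 2, U1 i j = !![1 - x/2, 0; 1, x/2] i j := by
    intro i j; fin_cases i <;> fin_cases j <;> simp [hU1]
  refine ⟨U1, U2, U1, U2, ![0,1], ![0,1], 1 - x/2, rfl, rfl, ?_, ?_, ?_, ?_⟩
  · -- NE
    refine ⟨⟨?_, ?_⟩, ⟨?_, ?_⟩, ?_, ?_⟩
    · intro s; fin_cases s <;> norm_num
    · simp [Fin.sum_univ_two]
    · intro s; fin_cases s <;> norm_num
    · simp [Fin.sum_univ_two]
    · rintro τ ⟨hpos, hsum⟩
      have h0 := hpos 0; have h1 := hpos 1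
      simp [Fin.sum_univ_two] at hsum
      simp [E2, Fin.sum_univ_two, hU1]
      nlinarith
    · rintro τ ⟨hpos, hsum⟩
      have h0 := hpos 0; have h1 := hpos 1
      simp [Fin.sum_univ_two] at hsum
      simp [E2, Fin.sum_univ_two, hU2]
      nlinarith
  · -- uniqueness
    rintro τ1 τ2 ⟨⟨h1pos, h1sum⟩, ⟨h2pos, h2sum⟩, hbr1, hbr2⟩
    have d1 : IsDist ![(0:ℝ),1] := ⟨by intro s; fin_cases s <;> norm_num, by simp [Fin.sum_univ_two]⟩
    have k1 := hbr1 ![0,1] d1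
    have k2 := hbr2 ![0,1] d1
    simp [E2, Fin.sum_univ_two, hU1, hU2] at k1 k2
    have h10 := h1pos 0; have h11 := h1pos 1
    have h20 := h2pos 0; have h21 := h2pos 1
    simp [Fin.sum_univ_two] at h1sum h2sum
    have h11' : τ1 1 = 1 - τ1 0 := by linarith
    have h21' : τ2 1 = 1 - τ2 0 := by linarith
    rw [h11', h21'] at k1 k2
    have e1 : τ1 0 = 0 := by
      rcases eq_or_lt_of_le h10 with h | h
      · exact h.symm
      · exfalso; nlinarith [k1, mul_pos h hx]
    have e2 : τ2 0 = 0 := by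
      rcases eq_or_lt_of_le h20 with h | h
      · exact h.symm
      · exfalso; nlinarith [k2, mul_pos h hx]
    constructor
    · funext s; fin_cases s
      · simpa using e1
      · have : τ1 1 = 1 := by linarith
        simpa using this
    · funext s; fin_cases s
      · simpa using e2
      · have : τ2 1 = 1 := by linarith
        simpa using this
  · -- IsGreatest
    constructor
    · refine ⟨![1,0], ![1,0], ⟨by intro s; fin_cases s <;> norm_num, by simp [Fin.sum_univ_two]⟩,
        ⟨by intro s; fin_cases s <;> norm_num, by simp [Fin.sum_univ_two]⟩, ?_⟩
      simp [E2, Fin.sum_univ_two, hU1, hU2]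
    · rintro w ⟨τ1, τ2, ⟨h1pos, h1sum⟩, ⟨h2pos, h2sum⟩, rfl⟩
      have h10 := h1pos 0; have h11 := h1pos 1
      have h20 := h2pos 0; have h21 := h2pos 1
      simp [Fin.sum_univ_two] at h1sum h2sum
      have hx' : (0:ℝ) ≤ 1 - x := by linarith
      have hprod : (τ1 0 + τ1 1) * (τ2 0 + τ2 1) = 1 := by rw [h1sum, h2sum]; ring
      simp [E2, Fin.sum_univ_two, hU1, hU2]
      nlinarith [mul_nonneg h10 h20, mul_nonneg h10 h21, mul_nonneg h11 h20,
        mul_nonneg h11 h21, hprod, mul_nonneg (mul_nonneg h10 h21) hx',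
        mul_nonneg (mul_nonneg h11 h20) hx', mul_nonneg (mul_nonneg h11 h21) hx']
  · -- ratio
    have hsup1 : Finset.univ.sup' ⟨((0 : Fin 2), (0 : Fin 2)), Finset.mem_univ _⟩
        (fun p : Fin 2 × Fin 2 => U1 p.1 p.2) = 1 := by
      refine le_antisymm (Finset.sup'_le _ _ ?_) ?_
      · rintro ⟨i, j⟩ _; fin_cases i <;> fin_cases j <;> simp [hU1] <;> linarith
      · exact Finset.le_sup' (f := fun p : Fin 2 × Fin 2 => U1 p.1 p.2)
          (Finset.mem_univ ((1 : Fin 2), (0 : Fin 2)))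
    have hsup2 : Finset.univ.sup' ⟨((0 : Fin 2), (0 : Fin 2)), Finset.mem_univ _⟩
        (fun p : Fin 2 × Fin 2 => U2 p.1 p.2) = 1 := by
      refine le_antisymm (Finset.sup'_le _ _ ?_) ?_
      · rintro ⟨i, j⟩ _; fin_cases i <;> fin_cases j <;> simp [hU2] <;> linarith
      · exact Finset.le_sup' (f := fun p : Fin 2 × Fin 2 => U2 p.1 p.2)
          (Finset.mem_univ ((0 : Fin 2), (1 : Fin 2)))
    have hinf1 : Finset.univ.inf' ⟨((0 : Fin 2), (0 : Fin 2)), Finset.mem_univ _⟩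
        (fun p : Fin 2 × Fin 2 => U1 p.1 p.2) = 0 := by
      refine le_antisymm ?_ (Finset.le_inf' _ _ ?_)
      · exact Finset.inf'_le (f := fun p : Fin 2 × Fin 2 => U1 p.1 p.2)
          (Finset.mem_univ ((0 : Fin 2), (1 : Fin 2)))
      · rintro ⟨i, j⟩ _; fin_cases i <;> fin_cases j <;> simp [hU1] <;> linarith
    have hinf2 : Finset.univ.inf' ⟨((0 : Fin 2), (0 : Fin 2)), Finset.mem_univ _⟩
        (fun p : Fin 2 × Fin 2 => U2 p.1 p.2) = 0 := by
      refine le_antisymm ?_ (Finset.le_inf' _ _ ?_)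
      · exact Finset.inf'_le (f := fun p : Fin 2 × Fin 2 => U2 p.1 p.2)
          (Finset.mem_univ ((1 : Fin 2), (0 : Fin 2)))
      · rintro ⟨i, j⟩ _; fin_cases i <;> fin_cases j <;> simp [hU2] <;> linarith
    rw [hsup1, hsup2, hinf1, hinf2]
    have hE1 : E2 ![(0:ℝ),1] ![(0:ℝ),1] U1 = x/2 := by
      simp [E2, Fin.sum_univ_two, hU1]
    have hE2 : E2 ![(0:ℝ),1] ![(0:ℝ),1] U2 = x/2 := by
      simp [E2, Fin.sum_univ_two, hU2]
    rw [hE1, hE2]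
    norm_num
    ring
end

section
/- Fix ε¹, ε² ∈ (0,1]. There exists a two-player 3×3 game in which the unique Nash equilibrium achieves the ideal welfare (w_{0} = w₊), yet for every x > 0 there is a parameter choice making the worst ε-Nash equilibrium welfare satisfy w_ε - w₋ < x. Concretely, in the game with payoffs u¹(A,A)=u²(A,A)=1, u¹(A,B)=x, u²(A,B)=1-ε², u¹(B,A)=1-ε¹, u²(B,A)=x, u¹(B,B)=(1-ε¹)x, u²(B,B)=(1-ε²)x, u¹(B,C)=x, u²(C,B)=x, and 0 elsewhere, (A,A) is the unique NE with welfare 1, while (B,B) is an ε-Nash equilibrium with welfare less than x. -/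
/-!
Row `C` pays player 1 nothing, while against any column mix one of `A`, `B` pays a positive
amount, so no equilibrium puts weight on `C`; symmetrically for player 2. Once `C` is excluded
for the opponent, `B` is strictly dominated by `A` by the factor `1 - εⁱ`, so the equilibrium is
`(A, A)`. At `(B, B)` each player's payoffs against the opponent's `B` range over `[0, x]`, and
`(1 - εⁱ) x` sits exactly at the `εⁱ`-threshold.
-/

open Finset

/-- Point mass on a pure strategy. -/
def pureStrat {d : ℕ} (t : Fin d) : Fin d → ℝ := fun s => if s = t then 1 else 0

section Bimatrix

variable {d : ℕ}

def IsBestResponse (u : Fin d → Fin d → ℝ) (σ τ : Fin d → ℝ) : Prop :=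
  ∀ ρ : Fin d → ℝ, IsDist ρ → E2 ρ τ u ≤ E2 σ τ u

lemma E2_swap (σ τ : Fin d → ℝ) (u : Fin d → Fin d → ℝ) :
    E2 σ τ (Function.swap u) = E2 τ σ u := by
  unfold E2
  rw [Finset.sum_comm]
  simp only [Function.swap, mul_comm (σ _)]

lemma isNE_iff_isBestResponse (u1 u2 : Fin d → Fin d → ℝ) (σ1 σ2 : Fin d → ℝ) :
    IsNE u1 u2 σ1 σ2 ↔ IsDist σ1 ∧ IsDist σ2 ∧
      IsBestResponse u1 σ1 σ2 ∧ IsBestResponse (Function.swap u2) σ2 σ1 := by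
  simp only [IsNE, IsBestResponse, E2_swap]

lemma isDist_pureStrat (t : Fin d) : IsDist (pureStrat t) := by
  refine ⟨fun s => ?_, by simp [pureStrat]⟩
  unfold pureStrat
  positivity

lemma IsDist.eq_pureStrat {σ : Fin d → ℝ} (hσ : IsDist σ) {t : Fin d}
    (h : ∀ s, s ≠ t → σ s = 0) : σ = pureStrat t := by
  have ht : σ t = 1 := by
    rw [← hσ.2, Finset.sum_eq_single t (fun s _ hs => h s hs) (by simp)]
  funext s
  by_cases hs : s = t
  · simp [pureStrat, hs, ht]
  · simp [pureStrat, hs, h s hs]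

lemma E2_pureStrat (s : Fin d) (τ : Fin d → ℝ) (u : Fin d → Fin d → ℝ) :
    E2 (pureStrat s) τ u = ∑ t, τ t * u s t := by
  simp [E2, pureStrat]

lemma E2_pureStrat_pureStrat (s t : Fin d) (u : Fin d → Fin d → ℝ) :
    E2 (pureStrat s) (pureStrat t) u = u s t := by
  simp [E2_pureStrat, pureStrat]

lemma E2_eq_sum_pureStrat (ρ τ : Fin d → ℝ) (u : Fin d → Fin d → ℝ) :
    E2 ρ τ u = ∑ s, ρ s * E2 (pureStrat s) τ u := by
  simp_rw [E2_pureStrat, Finset.mul_sum, E2, mul_assoc]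

lemma isBestResponse_iff_pureStrat (u : Fin d → Fin d → ℝ) (σ τ : Fin d → ℝ) :
    IsBestResponse u σ τ ↔ ∀ s, E2 (pureStrat s) τ u ≤ E2 σ τ u := by
  refine ⟨fun h s => h _ (isDist_pureStrat s), fun h ρ hρ => ?_⟩
  calc E2 ρ τ u = ∑ s, ρ s * E2 (pureStrat s) τ u := E2_eq_sum_pureStrat ρ τ u
    _ ≤ ∑ s, ρ s * E2 σ τ u := by gcongr with s; exacts [hρ.1 s, h s]
    _ = E2 σ τ u := by rw [← Finset.sum_mul, hρ.2, one_mul]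

lemma IsBestResponse.eq_zero_of_lt {u : Fin d → Fin d → ℝ} {σ τ : Fin d → ℝ}
    (h : IsBestResponse u σ τ) (hσ : IsDist σ) {s t : Fin d}
    (hlt : E2 (pureStrat s) τ u < E2 (pureStrat t) τ u) : σ s = 0 := by
  set r : Fin d → ℝ := fun i => E2 (pureStrat i) τ u
  have hr : ∀ i, r i ≤ E2 σ τ u := (isBestResponse_iff_pureStrat u σ τ).1 h
  have hzero : ∑ i, σ i * (E2 σ τ u - r i) = 0 := by
    simp only [mul_sub, Finset.sum_sub_distrib, ← Finset.sum_mul, hσ.2, one_mul, r,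
      ← E2_eq_sum_pureStrat, sub_self]
  have hterm := (Finset.sum_eq_zero_iff_of_nonneg fun i _ =>
    mul_nonneg (hσ.1 i) (sub_nonneg.2 (hr i))).1 hzero s (mem_univ s)
  have hgap : 0 < E2 σ τ u - r s := by linarith [hr t]
  exact (mul_eq_zero.1 hterm).resolve_right hgap.ne'

end Bimatrix

section FiniteExtrema

variable {ι : Type*} {s : Finset ι} {f : ι → ℝ} {a : ℝ} {b : ι}

lemma Finset.sup'_eq_of_mem (H : s.Nonempty) (hb : b ∈ s) (hfb : f b = a)
    (h : ∀ c ∈ s, f c ≤ a) : s.sup' H f = a :=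
  le_antisymm (Finset.sup'_le H f h) (hfb ▸ Finset.le_sup' f hb)

lemma Finset.inf'_eq_of_mem (H : s.Nonempty) (hb : b ∈ s) (hfb : f b = a)
    (h : ∀ c ∈ s, a ≤ f c) : s.inf' H f = a :=
  le_antisymm (hfb ▸ Finset.inf'_le f hb) (Finset.le_inf' H f h)

end FiniteExtrema

def IsEpsBestPureResponse {ι : Type*} [Fintype ι] [Nonempty ι] (ε : ℝ) (v : ι → ℝ)
    (s : ι) : Prop :=
  v s ≥ univ.inf' univ_nonempty v +
    (1 - ε) * (univ.sup' univ_nonempty v - univ.inf' univ_nonempty v)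

/-- Player 1's payoffs, with strategies `A, B, C` numbered `0, 1, 2`; player 2's payoff matrix is
the transpose of this one with `ε²` in place of `ε¹`. -/
def gameMatrix (ε x : ℝ) : Fin 3 → Fin 3 → ℝ :=
  ![![1, x, 0], ![1 - ε, (1 - ε) * x, x], ![0, 0, 0]]

section GameMatrix

variable {ε x : ℝ}

lemma swap_gameMatrix (ε x : ℝ) :
    Function.swap (gameMatrix ε x) = ![![1, 1 - ε, 0], ![x, (1 - ε) * x, 0], ![0, x, 0]] := by
  funext s t
  fin_cases s <;> fin_cases t <;> rfl

lemma E2_pureStrat_gameMatrix (τ : Fin 3 → ℝ) :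
    E2 (pureStrat 0) τ (gameMatrix ε x) = τ 0 + x * τ 1 ∧
    E2 (pureStrat 1) τ (gameMatrix ε x) = (1 - ε) * (τ 0 + x * τ 1) + x * τ 2 ∧
    E2 (pureStrat 2) τ (gameMatrix ε x) = 0 := by
  simp only [E2_pureStrat, Fin.sum_univ_three, gameMatrix]
  refine ⟨?_, ?_, ?_⟩ <;> simp <;> ring

lemma IsDist.apply_zero_add_mul_apply_one_pos (hx : 0 < x) {τ : Fin 3 → ℝ} (hτ : IsDist τ)
    (hτ2 : τ 2 = 0) : 0 < τ 0 + x * τ 1 := by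
  have hsum : τ 0 + τ 1 = 1 := by simpa [Fin.sum_univ_three, hτ2] using hτ.2
  rcases (hτ.1 0).eq_or_lt with h0 | h0
  · rw [← h0, zero_add, show τ 1 = 1 by linarith, mul_one]
    exact hx
  · have := hτ.1 1
    positivity

lemma isBestResponse_gameMatrix_pureStrat_zero (hε : 0 ≤ ε) :
    IsBestResponse (gameMatrix ε x) (pureStrat 0) (pureStrat 0) := by
  rw [isBestResponse_iff_pureStrat]
  intro s
  simp only [E2_pureStrat_pureStrat]
  fin_cases s <;> simp [gameMatrix, hε]

lemma IsBestResponse.apply_two_eq_zero_of_gameMatrix (hε : ε ≤ 1) (hx : 0 < x)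
    {σ τ : Fin 3 → ℝ} (hσ : IsDist σ) (hτ : IsDist τ)
    (h : IsBestResponse (gameMatrix ε x) σ τ) : σ 2 = 0 := by
  obtain ⟨hA, hB, hC⟩ := E2_pureStrat_gameMatrix (ε := ε) (x := x) τ
  by_cases hτ2 : τ 2 = 0
  · refine h.eq_zero_of_lt hσ (t := 0) ?_
    rw [hA, hC]
    exact hτ.apply_zero_add_mul_apply_one_pos hx hτ2
  · refine h.eq_zero_of_lt hσ (t := 1) ?_
    rw [hB, hC]
    have hτ2pos : 0 < τ 2 := (hτ.1 2).lt_of_ne' hτ2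
    have hτ0 := hτ.1 0
    have hτ1 := hτ.1 1
    exact add_pos_of_nonneg_of_pos (mul_nonneg (sub_nonneg.2 hε) (by positivity))
      (mul_pos hx hτ2pos)

lemma IsBestResponse.eq_pureStrat_zero_of_gameMatrix (hε : 0 < ε) (hx : 0 < x)
    {σ τ : Fin 3 → ℝ} (hσ : IsDist σ) (hτ : IsDist τ) (hτ2 : τ 2 = 0)
    (h : IsBestResponse (gameMatrix ε x) σ τ) : σ = pureStrat 0 := by
  obtain ⟨hA, hB, hC⟩ := E2_pureStrat_gameMatrix (ε := ε) (x := x) τ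
  have hApos := hτ.apply_zero_add_mul_apply_one_pos hx hτ2
  refine hσ.eq_pureStrat fun s hs => h.eq_zero_of_lt hσ (t := 0) ?_
  obtain rfl | rfl : s = 1 ∨ s = 2 := by fin_cases s <;> simp_all
  · rw [hA, hB, hτ2]
    nlinarith
  · rw [hA, hC]
    exact hApos

lemma gameMatrix_le_one (hε0 : 0 ≤ ε) (hx0 : 0 ≤ x) (hx1 : x ≤ 1) (s t : Fin 3) :
    gameMatrix ε x s t ≤ 1 := by
  fin_cases s <;> fin_cases t <;> simp [gameMatrix] <;> nlinarith

lemma isEpsBestPureResponse_gameMatrix (hε0 : 0 ≤ ε) (hε1 : ε ≤ 1) (hx : 0 ≤ x) :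
    IsEpsBestPureResponse ε (fun t => gameMatrix ε x t 1) 1 := by
  have hinf : univ.inf' univ_nonempty (fun t => gameMatrix ε x t 1) = 0 := by
    refine Finset.inf'_eq_of_mem _ (mem_univ 2) rfl fun t _ => ?_
    fin_cases t <;> simp [gameMatrix] <;> nlinarith
  have hsup : univ.sup' univ_nonempty (fun t => gameMatrix ε x t 1) = x := by
    refine Finset.sup'_eq_of_mem _ (mem_univ 0) rfl fun t _ => ?_
    fin_cases t <;> simp [gameMatrix] <;> nlinarith
  rw [IsEpsBestPureResponse, hinf, hsup]
  simp [gameMatrix]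

end GameMatrix

theorem stmt9 (ε1 ε2 : ℝ) (hε1 : 0 < ε1 ∧ ε1 ≤ 1) (hε2 : 0 < ε2 ∧ ε2 ≤ 1)
    (x : ℝ) (hx : 0 < x) (hx1 : x ≤ 1) :
    let u1 : Fin 3 → Fin 3 → ℝ :=
      ![![1, x, 0], ![1 - ε1, (1 - ε1) * x, x], ![0, 0, 0]]
    let u2 : Fin 3 → Fin 3 → ℝ :=
      ![![1, 1 - ε2, 0], ![x, (1 - ε2) * x, 0], ![0, x, 0]]
    -- (A,A) is a Nash equilibrium, and it is unique
    IsNE u1 u2 (pureStrat 0) (pureStrat 0) ∧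
    (∀ τ1 τ2 : Fin 3 → ℝ, IsNE u1 u2 τ1 τ2 → τ1 = pureStrat 0 ∧ τ2 = pureStrat 0) ∧
    -- the unique NE achieves the ideal welfare: w(A,A) = w₊
    (u1 0 0 + u2 0 0) / 2 =
      (Finset.univ.sup' ⟨(0 : Fin 3 × Fin 3), Finset.mem_univ _⟩
          (fun p : Fin 3 × Fin 3 => u1 p.1 p.2) +
        Finset.univ.sup' ⟨(0 : Fin 3 × Fin 3), Finset.mem_univ _⟩
          (fun p : Fin 3 × Fin 3 => u2 p.1 p.2)) / 2 ∧
    -- (B,B) is an ε-Nash equilibrium: each player plays an εⁱ-best response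
    (u1 1 1 ≥ Finset.univ.inf' ⟨(0 : Fin 3), Finset.mem_univ _⟩ (fun t => u1 t 1) +
      (1 - ε1) * (Finset.univ.sup' ⟨(0 : Fin 3), Finset.mem_univ _⟩ (fun t => u1 t 1) -
        Finset.univ.inf' ⟨(0 : Fin 3), Finset.mem_univ _⟩ (fun t => u1 t 1))) ∧
    (u2 1 1 ≥ Finset.univ.inf' ⟨(0 : Fin 3), Finset.mem_univ _⟩ (fun t => u2 1 t) +
      (1 - ε2) * (Finset.univ.sup' ⟨(0 : Fin 3), Finset.mem_univ _⟩ (fun t => u2 1 t) -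
        Finset.univ.inf' ⟨(0 : Fin 3), Finset.mem_univ _⟩ (fun t => u2 1 t))) ∧
    -- and (B,B) has welfare less than x
    (u1 1 1 + u2 1 1) / 2 < x := by
  intro u1 u2
  obtain ⟨hε1, hε1'⟩ := hε1
  obtain ⟨hε2, hε2'⟩ := hε2
  rw [show u1 = gameMatrix ε1 x from rfl,
    show u2 = Function.swap (gameMatrix ε2 x) from (swap_gameMatrix ε2 x).symm]
  have hmax1 : univ.sup' univ_nonempty (fun p : Fin 3 × Fin 3 => gameMatrix ε1 x p.1 p.2) = 1 :=
    Finset.sup'_eq_of_mem _ (mem_univ 0) rfl fun p _ => gameMatrix_le_one hε1.le hx.le hx1 _ _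
  have hmax2 : univ.sup' univ_nonempty
      (fun p : Fin 3 × Fin 3 => Function.swap (gameMatrix ε2 x) p.1 p.2) = 1 :=
    Finset.sup'_eq_of_mem _ (mem_univ 0) rfl fun p _ => gameMatrix_le_one hε2.le hx.le hx1 _ _
  refine ⟨?_, fun τ1 τ2 hNE => ?_, ?_, isEpsBestPureResponse_gameMatrix hε1.le hε1' hx.le,
    isEpsBestPureResponse_gameMatrix hε2.le hε2' hx.le, ?_⟩
  · exact (isNE_iff_isBestResponse _ _ _ _).2 ⟨isDist_pureStrat 0, isDist_pureStrat 0,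
      isBestResponse_gameMatrix_pureStrat_zero hε1.le,
      isBestResponse_gameMatrix_pureStrat_zero hε2.le⟩
  · obtain ⟨hτ1, hτ2, h1, h2⟩ := (isNE_iff_isBestResponse _ _ _ _).1 hNE
    exact ⟨h1.eq_pureStrat_zero_of_gameMatrix hε1 hx hτ1 hτ2
        (h2.apply_two_eq_zero_of_gameMatrix hε2' hx hτ2 hτ1),
      h2.eq_pureStrat_zero_of_gameMatrix hε2 hx hτ2 hτ1
        (h1.apply_two_eq_zero_of_gameMatrix hε1' hx hτ1 hτ2)⟩
  · rw [hmax1, hmax2]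
    simp [gameMatrix, Function.swap]
  · simp [gameMatrix, Function.swap]
    linarith [mul_pos hε1 hx, mul_pos hε2 hx]
end

section
/- Let D be a delegation game with principal utilities ûⁱ = m̂ⁱ·ûⁱ_ν + ĉⁱ𝟏 and agent utilities uⁱ = mⁱ·uⁱ_ν + cⁱ𝟏 (normalised as above), and let K be a constant with ‖v‖_∞ ≤ K·m(v) for all v ∈ ℝ^d. Let ŝ⋆ be a pure profile achieving maximal principal welfare. Then for any mixed profile σ: ŵ⋆ - ŵ(σ) ≤ (1/n)Σᵢ rⁱ(uⁱ(ŝ⋆) - E_σ[uⁱ]) + (4K/n)Σᵢ m̂ⁱ(1 - IAⁱ), where rⁱ = m̂ⁱ/mⁱ and IAⁱ = 1 - (1/2)m(ûⁱ_ν - uⁱ_ν). -/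
open Finset

def expv {d : ℕ} (σ u : Fin d → ℝ) : ℝ := ∑ s, σ s * u s

theorem stmt11 {n d : ℕ} (hn : 0 < n)
    (m : (Fin d → ℝ) → ℝ) (K : ℝ)
    (hK : ∀ v : Fin d → ℝ, ‖v‖ ≤ K * m v)
    (uhatν uν : Fin n → Fin d → ℝ)
    (mhat mag : Fin n → ℝ) (chat c : Fin n → ℝ)
    (hmhat : ∀ i, 0 < mhat i) (hmag : ∀ i, 0 < mag i)
    (hnorm1 : ∀ i, m (uhatν i) = 1) (hnorm2 : ∀ i, m (uν i) = 1)
    -- principal and agent utilities in normalised form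
    (uhat u : Fin n → Fin d → ℝ)
    (huhat : ∀ i, uhat i = mhat i • uhatν i + chat i • (1 : Fin d → ℝ))
    (hu : ∀ i, u i = mag i • uν i + c i • (1 : Fin d → ℝ))
    -- ŝ⋆ is a pure profile achieving maximal principal welfare
    (shat : Fin d)
    (hstar : ∀ σ : Fin d → ℝ, IsDist σ →
      (n : ℝ)⁻¹ * ∑ i, expv σ (uhat i) ≤ (n : ℝ)⁻¹ * ∑ i, uhat i shat) :
    ∀ σ : Fin d → ℝ, IsDist σ →
      (n : ℝ)⁻¹ * ∑ i, uhat i shat - (n : ℝ)⁻¹ * ∑ i, expv σ (uhat i) ≤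
        (n : ℝ)⁻¹ * ∑ i, (mhat i / mag i) * (u i shat - expv σ (u i)) +
        (4 * K / n) * ∑ i, mhat i * (1 - (1 - (1 / 2) * m (uhatν i - uν i))) := by
  intro σ hσ
  obtain ⟨hσ0, hσ1⟩ := hσ
  have key : ∀ i, uhat i shat - expv σ (uhat i) ≤
      (mhat i / mag i) * (u i shat - expv σ (u i)) +
        4 * K * (mhat i * (1 - (1 - (1 / 2) * m (uhatν i - uν i)))) := by
    intro i
    have hm := hmag i
    have hmh := hmhat i
    set w : Fin d → ℝ := uhatν i - uν i with hw
    have h1 : w shat ≤ ‖w‖ := le_trans (le_abs_self _) (norm_le_pi_norm w shat)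
    have h2 : -‖w‖ ≤ expv σ w := by
      have hb : ∀ s ∈ Finset.univ, σ s * (-‖w‖) ≤ σ s * w s := by
        intro s _
        exact mul_le_mul_of_nonneg_left
          (neg_le_of_neg_le (le_trans (neg_le_abs _) (norm_le_pi_norm w s))) (hσ0 s)
      calc -‖w‖ = ∑ s, σ s * (-‖w‖) := by rw [← Finset.sum_mul, hσ1, one_mul]
        _ ≤ ∑ s, σ s * w s := Finset.sum_le_sum hb
    have h3 : ‖w‖ ≤ K * m w := hK w
    have e1 : expv σ (uhat i) = mhat i * expv σ (uhatν i) + chat i := by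
      unfold expv
      rw [huhat]
      have hterm : ∀ s ∈ Finset.univ, σ s * (mhat i • uhatν i + chat i • (1 : Fin d → ℝ)) s
          = mhat i * (σ s * uhatν i s) + chat i * σ s := fun s _ => by
        simp [Pi.add_apply]; ring
      rw [Finset.sum_congr rfl hterm, Finset.sum_add_distrib,
        ← Finset.mul_sum, ← Finset.mul_sum, hσ1, mul_one]
    have e2 : expv σ (u i) = mag i * expv σ (uν i) + c i := by
      unfold expv
      rw [hu]
      have hterm : ∀ s ∈ Finset.univ, σ s * (mag i • uν i + c i • (1 : Fin d → ℝ)) s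
          = mag i * (σ s * uν i s) + c i * σ s := fun s _ => by
        simp [Pi.add_apply]; ring
      rw [Finset.sum_congr rfl hterm, Finset.sum_add_distrib,
        ← Finset.mul_sum, ← Finset.mul_sum, hσ1, mul_one]
    have e3 : uhat i shat = mhat i * uhatν i shat + chat i := by
      simp [huhat]
    have e4 : u i shat = mag i * uν i shat + c i := by
      simp [hu]
    have e5 : expv σ w = expv σ (uhatν i) - expv σ (uν i) := by
      simp only [hw, expv, Pi.sub_apply, mul_sub, Finset.sum_sub_distrib]
    have e6 : w shat = uhatν i shat - uν i shat := rfl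
    have hdiv : mhat i / mag i * (u i shat - expv σ (u i))
        = mhat i * (uν i shat - expv σ (uν i)) := by
      rw [e2, e4]; field_simp; ring
    rw [hdiv, e1, e3]
    have hgoal : mhat i * (w shat - expv σ w) ≤ mhat i * (2 * (K * m w)) := by
      apply mul_le_mul_of_nonneg_left _ hmh.le
      nlinarith
    rw [e5, e6] at hgoal
    nlinarith
  have hsum : ∑ i, (uhat i shat - expv σ (uhat i)) ≤
      ∑ i, ((mhat i / mag i) * (u i shat - expv σ (u i)) +
        4 * K * (mhat i * (1 - (1 - (1 / 2) * m (uhatν i - uν i))))) :=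
    Finset.sum_le_sum (fun i _ => key i)
  have hn' : (0:ℝ) ≤ (n:ℝ)⁻¹ := by positivity
  calc (n : ℝ)⁻¹ * ∑ i, uhat i shat - (n : ℝ)⁻¹ * ∑ i, expv σ (uhat i)
      = (n : ℝ)⁻¹ * ∑ i, (uhat i shat - expv σ (uhat i)) := by
        rw [Finset.sum_sub_distrib]; ring
    _ ≤ (n : ℝ)⁻¹ * ∑ i, ((mhat i / mag i) * (u i shat - expv σ (u i)) +
        4 * K * (mhat i * (1 - (1 - (1 / 2) * m (uhatν i - uν i))))) :=
        mul_le_mul_of_nonneg_left hsum hn'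
    _ = _ := by
        rw [Finset.sum_add_distrib, ← Finset.mul_sum]; ring
end

section
/- With notation as in the welfare-regret bound, for any r* > 0: (1/n)Σᵢ rⁱ(uⁱ(ŝ⋆) - E_σ[uⁱ]) ≤ r*(w⋆ - w(σ)) + R(σ), where w⋆ = max_σ w(σ), w(σ) = (1/n)Σᵢ E_σ[uⁱ], and R(σ) = (1/n)Σᵢ (m̂ⁱ - r*·mⁱ)(uⁱ_ν(ŝ⋆) - E_σ[uⁱ_ν]). Moreover, if all ratios rⁱ = m̂ⁱ/mⁱ are equal then choosing r* = rⁱ gives R(σ) = 0. -/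
open Finset

lemma key_delta {n d : ℕ} (uν : Fin n → Fin d → ℝ) (mag : Fin n → ℝ) (c : Fin n → ℝ)
    (u : Fin n → Fin d → ℝ)
    (hu : ∀ i, u i = mag i • uν i + c i • (1 : Fin d → ℝ))
    (shat : Fin d) (σ : Fin d → ℝ) (hσ : IsDist σ) (i : Fin n) :
    u i shat - expv σ (u i) = mag i * (uν i shat - expv σ (uν i)) := by
  have h1 : expv σ (u i) = mag i * expv σ (uν i) + c i := by
    have hterm : ∀ s, σ s * u i s = mag i * (σ s * uν i s) + c i * σ s := by
      intro s; simp [hu i]; ring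
    simp only [expv, hterm]
    rw [Finset.sum_add_distrib, ← Finset.mul_sum, ← Finset.mul_sum, hσ.2, mul_one]
  have h2 : u i shat = mag i * uν i shat + c i := by
    simp [hu i]
  rw [h1, h2]; ring

theorem stmt12 {n d : ℕ} (hn : 0 < n)
    (uhat : Fin n → Fin d → ℝ)
    (uν : Fin n → Fin d → ℝ) (mhat mag : Fin n → ℝ) (c : Fin n → ℝ)
    (hmhat : ∀ i, 0 < mhat i) (hmag : ∀ i, 0 < mag i)
    (u : Fin n → Fin d → ℝ)
    (hu : ∀ i, u i = mag i • uν i + c i • (1 : Fin d → ℝ))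
    -- ŝ⋆ is a pure profile maximising principal welfare
    (shat : Fin d)
    (hstar : ∀ σ : Fin d → ℝ, IsDist σ →
      (n : ℝ)⁻¹ * ∑ i, expv σ (uhat i) ≤ (n : ℝ)⁻¹ * ∑ i, uhat i shat)
    -- w⋆ is the maximal agent welfare over mixed profiles
    (wstar : ℝ)
    (hwstar : IsGreatest {w : ℝ | ∃ σ : Fin d → ℝ, IsDist σ ∧
      w = (n : ℝ)⁻¹ * ∑ i, expv σ (u i)} wstar) :
    (∀ rstar : ℝ, 0 < rstar → ∀ σ : Fin d → ℝ, IsDist σ →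
      (n : ℝ)⁻¹ * ∑ i, (mhat i / mag i) * (u i shat - expv σ (u i)) ≤
        rstar * (wstar - (n : ℝ)⁻¹ * ∑ i, expv σ (u i)) +
        (n : ℝ)⁻¹ * ∑ i, (mhat i - rstar * mag i) * (uν i shat - expv σ (uν i))) ∧
    (∀ r' : ℝ, (∀ i, mhat i / mag i = r') → ∀ σ : Fin d → ℝ, IsDist σ →
      (n : ℝ)⁻¹ * ∑ i, (mhat i - r' * mag i) * (uν i shat - expv σ (uν i)) = 0) := by
  have hninv : (0:ℝ) ≤ (n:ℝ)⁻¹ := by positivity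
  -- wstar bounds the pure-profile welfare at shat
  have hws : (n : ℝ)⁻¹ * ∑ i, u i shat ≤ wstar := by
    apply hwstar.2
    refine ⟨fun s => if s = shat then 1 else 0, ⟨fun s => by positivity, by simp⟩, ?_⟩
    congr 1
    apply Finset.sum_congr rfl
    intro i _
    simp [expv, ite_mul]
  constructor
  · intro rstar hr σ hσ
    have hkey := key_delta uν mag c u hu shat σ hσ
    -- rewrite LHS sum
    have hL : ∑ i, (mhat i / mag i) * (u i shat - expv σ (u i))
        = ∑ i, mhat i * (uν i shat - expv σ (uν i)) := by
      apply Finset.sum_congr rfl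
      intro i _
      rw [hkey i]
      have hne := (hmag i).ne'
      field_simp
    -- rewrite the regret sum
    have hR : ∑ i, (mhat i - rstar * mag i) * (uν i shat - expv σ (uν i))
        = ∑ i, mhat i * (uν i shat - expv σ (uν i))
          - rstar * ∑ i, mag i * (uν i shat - expv σ (uν i)) := by
      rw [Finset.mul_sum, ← Finset.sum_sub_distrib]
      apply Finset.sum_congr rfl
      intro i _
      ring
    have hM : ∑ i, mag i * (uν i shat - expv σ (uν i))
        = ∑ i, u i shat - ∑ i, expv σ (u i) := by
      rw [← Finset.sum_sub_distrib]
      exact Finset.sum_congr rfl fun i _ => (hkey i).symm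
    rw [hL, hR]
    have h1 : (n : ℝ)⁻¹ * (∑ i, u i shat - ∑ i, expv σ (u i))
        ≤ wstar - (n : ℝ)⁻¹ * ∑ i, expv σ (u i) := by
      have := hws
      nlinarith [hws]
    have h2 := mul_le_mul_of_nonneg_left h1 hr.le
    rw [hM]
    nlinarith [h2]
  · intro r' hr' σ hσ
    have : ∀ i, mhat i - r' * mag i = 0 := by
      intro i
      have := hr' i
      have hmi := (hmag i).ne'
      field_simp at this
      linarith [this]
    simp only [this, zero_mul, Finset.sum_const_zero, mul_zero]
end

section
/- Let G be a finite n-player game with utilities uⁱ = mⁱ·uⁱ_ν + cⁱ𝟏 (mⁱ > 0), μ^w = (Σᵢ mⁱuⁱ_ν)/(Σᵢ mⁱ), CA = 1 - Σᵢ (mⁱ/Σⱼmⱼ)·m(μ^w - uⁱ_ν), and K with ‖v‖_∞ ≤ K·m(v) for all v. Then w₊ - w⋆ ≤ (K·Σᵢmⁱ/n)·(1 - CA), where w₊ = (1/n)Σᵢ max_s uⁱ(s) and w⋆ = max_s (1/n)Σᵢ uⁱ(s). -/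
open Finset

theorem stmt13 {n d : ℕ} (hn : 0 < n) (hd : 0 < d)
    (m : (Fin d → ℝ) → ℝ) (K : ℝ)
    (hK : ∀ v : Fin d → ℝ, ‖v‖ ≤ K * m v)
    (uν : Fin n → Fin d → ℝ) (mag : Fin n → ℝ) (c : Fin n → ℝ)
    (hmag : ∀ i, 0 < mag i)
    (u : Fin n → Fin d → ℝ)
    (hu : ∀ i, u i = mag i • uν i + c i • (1 : Fin d → ℝ)) :
    -- w₊ - w⋆ ≤ (K·Σᵢmⁱ/n)·(1 - CA)
    (n : ℝ)⁻¹ * ∑ i, Finset.univ.sup' ⟨⟨0, hd⟩, Finset.mem_univ _⟩ (u i) -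
      Finset.univ.sup' ⟨⟨0, hd⟩, Finset.mem_univ _⟩ (fun s => (n : ℝ)⁻¹ * ∑ i, u i s) ≤
    (K * (∑ i, mag i) / n) *
      (1 - (1 - ∑ i, (mag i / ∑ j, mag j) *
        m ((∑ j, mag j)⁻¹ • (∑ j, mag j • uν j) - uν i))) := by
  have ne : (Finset.univ : Finset (Fin d)).Nonempty := ⟨⟨0, hd⟩, Finset.mem_univ _⟩
  set M : ℝ := ∑ j, mag j with hMdef
  have hMpos : 0 < M := Finset.sum_pos (fun i _ => hmag i) ⟨⟨0, hn⟩, Finset.mem_univ _⟩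
  set μ : Fin d → ℝ := M⁻¹ • (∑ j, mag j • uν j) with hμdef
  set t : Fin n → ℝ := fun i => m (μ - uν i) with htdef
  have hn' : (0:ℝ) < n := by exact_mod_cast hn
  obtain ⟨s₀, -, hs₀⟩ := Finset.exists_mem_eq_sup' ne μ
  have hueval : ∀ i s, u i s = mag i * uν i s + c i := by
    intro i s
    simp [hu i]
  -- each individual sup bound
  have key : ∀ i, Finset.univ.sup' ne (u i) ≤ mag i * μ s₀ + c i + K * (mag i * t i) := by
    intro i
    apply Finset.sup'_le
    intro s _
    have h1 : uν i s - μ s ≤ K * t i := by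
      have h2 : uν i s - μ s ≤ ‖μ - uν i‖ := by
        calc uν i s - μ s ≤ |(μ - uν i) s| := by
              simp only [Pi.sub_apply]
              rw [abs_sub_comm]
              exact le_abs_self _
          _ ≤ ‖μ - uν i‖ := by
              simpa [Real.norm_eq_abs] using norm_le_pi_norm (μ - uν i) s
      exact h2.trans (hK _)
    have h3 : μ s ≤ μ s₀ := by rw [← hs₀]; exact Finset.le_sup' μ (Finset.mem_univ s)
    rw [hueval i s]
    nlinarith [hmag i]
  -- evaluate μ at s₀
  have hμs₀ : ∑ i, mag i * uν i s₀ = M * μ s₀ := by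
    have : μ s₀ = M⁻¹ * ∑ j, mag j * uν j s₀ := by
      simp [hμdef, Finset.sum_apply]
    rw [this]
    field_simp
  -- lower bound on w⋆
  have hlow : (n : ℝ)⁻¹ * (M * μ s₀ + ∑ i, c i) ≤
      Finset.univ.sup' ne (fun s => (n : ℝ)⁻¹ * ∑ i, u i s) := by
    have : (n : ℝ)⁻¹ * ∑ i, u i s₀ = (n : ℝ)⁻¹ * (M * μ s₀ + ∑ i, c i) := by
      rw [← hμs₀, ← Finset.sum_add_distrib]
      congr 1
      exact Finset.sum_congr rfl fun i _ => hueval i s₀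
    calc (n : ℝ)⁻¹ * (M * μ s₀ + ∑ i, c i) = (n : ℝ)⁻¹ * ∑ i, u i s₀ := this.symm
      _ ≤ _ := Finset.le_sup' (fun s => (n : ℝ)⁻¹ * ∑ i, u i s) (Finset.mem_univ s₀)
  -- upper bound on sum of sups
  have hup : ∑ i, Finset.univ.sup' ne (u i) ≤
      M * μ s₀ + (∑ i, c i) + K * ∑ i, mag i * t i := by
    calc ∑ i, Finset.univ.sup' ne (u i)
        ≤ ∑ i, (mag i * μ s₀ + c i + K * (mag i * t i)) :=
          Finset.sum_le_sum fun i _ => key i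
      _ = M * μ s₀ + (∑ i, c i) + K * ∑ i, mag i * t i := by
          rw [Finset.sum_add_distrib, Finset.sum_add_distrib, ← Finset.sum_mul,
            ← Finset.mul_sum]
  -- RHS simplification
  set T : ℝ := ∑ i, mag i * t i with hTdef
  have hRHS : (K * M / n) * (1 - (1 - ∑ i, (mag i / M) * t i)) = K * T / n := by
    have h1 : ∑ i, (mag i / M) * t i = M⁻¹ * T := by
      rw [hTdef, Finset.mul_sum]
      exact Finset.sum_congr rfl fun i _ => by ring
    rw [h1]
    field_simp
    ring
  rw [hRHS]
  have hsplit : (n : ℝ)⁻¹ * (M * μ s₀ + (∑ i, c i) + K * T) =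
      (n : ℝ)⁻¹ * (M * μ s₀ + ∑ i, c i) + K * T / n := by
    field_simp
  have hA : (n : ℝ)⁻¹ * ∑ i, Finset.univ.sup' ne (u i) ≤
      (n : ℝ)⁻¹ * (M * μ s₀ + (∑ i, c i) + K * T) :=
    mul_le_mul_of_nonneg_left hup (by positivity)
  linarith
end

section
/- With r* = (Σᵢ m̂ⁱ)/(Σᵢ mⁱ), the fairness remainder R(σ) = (1/n)Σᵢ(m̂ⁱ - r*·mⁱ)(uⁱ_ν(ŝ⋆) - E_σ[uⁱ_ν]) satisfies R(σ) ≤ (2K/n)Σᵢ |m̂ⁱ - r*·mⁱ|·d_wⁱ, where d_wⁱ = m(uⁱ_ν - μ^w) and K satisfies ‖v‖_∞ ≤ K·m(v) for all v. The proof uses that Σᵢ(m̂ⁱ - r*·mⁱ) = 0 for this choice of r*, and that |uⁱ_ν(s) - μ^w(s)| ≤ K·d_wⁱ pointwise. -/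
open Finset

section Weights

variable {ι : Type*} [Fintype ι]

theorem sum_sub_div_mul_eq_zero (a b : ι → ℝ) (hb : ∀ i, 0 < b i) :
    ∑ i, (a i - (∑ j, a j) / (∑ j, b j) * b i) = 0 := by
  rcases isEmpty_or_nonempty ι with hι | hι
  · simp
  have hS : (∑ j, b j) ≠ 0 := (sum_pos (fun j _ => hb j) univ_nonempty).ne'
  rw [sum_sub_distrib, ← mul_sum, div_mul_cancel₀ _ hS, sub_self]

theorem sum_mul_sub_const_of_sum_eq_zero {c : ι → ℝ} (hc : ∑ i, c i = 0) (x : ι → ℝ) (y : ℝ) :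
    ∑ i, c i * (x i - y) = ∑ i, c i * x i := by
  simp only [mul_sub, sum_sub_distrib, ← sum_mul, hc, zero_mul, sub_zero]

theorem sum_mul_le_sum_abs_mul {c x B : ι → ℝ} (hx : ∀ i, |x i| ≤ B i) :
    ∑ i, c i * x i ≤ ∑ i, |c i| * B i :=
  sum_le_sum fun i _ => calc
    c i * x i ≤ |c i| * |x i| := (le_abs_self _).trans (abs_mul _ _).le
    _ ≤ |c i| * B i := mul_le_mul_of_nonneg_left (hx i) (abs_nonneg _)

end Weights

section Expectation

variable {d : ℕ}

theorem expv_sub (σ u v : Fin d → ℝ) : expv σ (u - v) = expv σ u - expv σ v := by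
  simp only [expv, Pi.sub_apply, mul_sub, sum_sub_distrib]

theorem abs_expv_le {σ u : Fin d → ℝ} (hσ : IsDist σ) {B : ℝ} (hu : ∀ s, |u s| ≤ B) :
    |expv σ u| ≤ B :=
  calc |expv σ u| ≤ ∑ s, |σ s * u s| := abs_sum_le_sum_abs _ _
    _ = ∑ s, σ s * |u s| := by simp only [abs_mul, abs_of_nonneg (hσ.1 _)]
    _ ≤ ∑ s, σ s * B := sum_le_sum fun s _ => mul_le_mul_of_nonneg_left (hu s) (hσ.1 s)
    _ = B := by rw [← sum_mul, hσ.2, one_mul]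

theorem abs_sub_expv_le {σ u : Fin d → ℝ} (hσ : IsDist σ) {B : ℝ} (hu : ∀ s, |u s| ≤ B)
    (s : Fin d) : |u s - expv σ u| ≤ 2 * B := by
  linarith [abs_sub (u s) (expv σ u), hu s, abs_expv_le hσ hu]

theorem sub_expv_sub (σ u μ : Fin d → ℝ) (s : Fin d) :
    (u - μ) s - expv σ (u - μ) = (u s - expv σ u) - (μ s - expv σ μ) := by
  rw [expv_sub, Pi.sub_apply]
  ring

end Expectation

theorem stmt14_general {n d : ℕ}
    (m : (Fin d → ℝ) → ℝ) (K : ℝ)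
    (hK : ∀ v : Fin d → ℝ, ‖v‖ ≤ K * m v)
    (uν : Fin n → Fin d → ℝ) (mag mhat : Fin n → ℝ)
    (hmag : ∀ i, 0 < mag i)
    -- ŝ⋆ is a pure profile maximising principal welfare
    (shat : Fin d) :
    ∀ σ : Fin d → ℝ, IsDist σ →
      -- with r* = (Σᵢ m̂ⁱ)/(Σᵢ mⁱ), the fairness remainder R(σ) satisfies
      (n : ℝ)⁻¹ * ∑ i, (mhat i - ((∑ j, mhat j) / (∑ j, mag j)) * mag i) *
          (uν i shat - expv σ (uν i)) ≤
        (2 * K / n) * ∑ i, |mhat i - ((∑ j, mhat j) / (∑ j, mag j)) * mag i| *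
          m (uν i - (∑ j, mag j)⁻¹ • (∑ j, mag j • uν j)) := by
  intro σ hσ
  set μ := (∑ j, mag j)⁻¹ • (∑ j, mag j • uν j)
  set c := fun i => mhat i - ((∑ j, mhat j) / (∑ j, mag j)) * mag i
  have hpointwise (i : Fin n) (s : Fin d) : |(uν i - μ) s| ≤ K * m (uν i - μ) :=
    (norm_le_pi_norm (uν i - μ) s).trans (hK _)
  have hshift : ∑ i, c i * (uν i shat - expv σ (uν i))
      = ∑ i, c i * ((uν i - μ) shat - expv σ (uν i - μ)) := by
    simp only [sub_expv_sub]
    exact (sum_mul_sub_const_of_sum_eq_zero (sum_sub_div_mul_eq_zero mhat mag hmag) _ _).symm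
  have hbound : ∑ i, c i * (uν i shat - expv σ (uν i)) ≤ 2 * K * ∑ i, |c i| * m (uν i - μ) := by
    rw [hshift, mul_sum]
    refine (sum_mul_le_sum_abs_mul fun i => abs_sub_expv_le hσ (hpointwise i) shat).trans_eq ?_
    exact sum_congr rfl fun i _ => by ring
  calc (n : ℝ)⁻¹ * ∑ i, c i * (uν i shat - expv σ (uν i))
      ≤ (n : ℝ)⁻¹ * (2 * K * ∑ i, |c i| * m (uν i - μ)) :=
        mul_le_mul_of_nonneg_left hbound (by positivity)
    _ = (2 * K / n) * ∑ i, |c i| * m (uν i - μ) := by ring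

theorem stmt14 {n d : ℕ} (hn : 0 < n)
    (m : (Fin d → ℝ) → ℝ) (K : ℝ)
    (hK : ∀ v : Fin d → ℝ, ‖v‖ ≤ K * m v)
    (uν : Fin n → Fin d → ℝ) (mag mhat : Fin n → ℝ)
    (hmag : ∀ i, 0 < mag i) (hmhat : ∀ i, 0 < mhat i)
    -- ŝ⋆ is a pure profile maximising principal welfare
    (uhat : Fin n → Fin d → ℝ) (shat : Fin d)
    (hstar : ∀ σ : Fin d → ℝ, IsDist σ →
      (n : ℝ)⁻¹ * ∑ i, expv σ (uhat i) ≤ (n : ℝ)⁻¹ * ∑ i, uhat i shat) :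
    ∀ σ : Fin d → ℝ, IsDist σ →
      -- with r* = (Σᵢ m̂ⁱ)/(Σᵢ mⁱ), the fairness remainder R(σ) satisfies
      (n : ℝ)⁻¹ * ∑ i, (mhat i - ((∑ j, mhat j) / (∑ j, mag j)) * mag i) *
          (uν i shat - expv σ (uν i)) ≤
        (2 * K / n) * ∑ i, |mhat i - ((∑ j, mhat j) / (∑ j, mag j)) * mag i| *
          m (uν i - (∑ j, mag j)⁻¹ • (∑ j, mag j • uν j)) :=
  stmt14_general m K hK uν mag mhat hmag shat
end
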